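/- Let (R, m) be a Noetherian local ring and let M, M', N be finitely generated R-modules with N ≠ 0. Then surj_N(M') ≤ surj_N(M ⊕ M') − surj_N(M) ≤ μ_R(M'); equivalently, surj_N(M) + surj_N(M') ≤ surj_N(M ⊕ M') ≤ surj_N(M) + μ_R(M'), where μ_R(M') is the minimal number of generators of M'. -/

import Mathlib

/-!
If `M × M'` maps onto `N^c` and `M'` is generated by `g` elements, then `N^c` is spanned by
the image `U` of `M` together with `g` vectors. Each vector can be removed at the cost of one
coordinate: if `U ⊔ R ∙ v = ⊤`, then modulo `U + 𝔪 N^(c+1)` everything is a multiple of `v`,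
so some coordinate vector `Pi.single i (v i)` that is nonzero there already spans the
quotient; the projection forgetting coordinate `i` then maps `U` onto `N^c` by Nakayama.
Hence `M` maps onto `N^(c-g)`. Applied to `M = 0`, the same argument gives `surj_N(M') ≤ μ(M')`,
so the supremum defining `surj_N` is attained; the lower bound is then the product of two
surjections.
-/

/-- The surjective number `surj_N(M)`: the largest `n` such that there is a
surjective `R`-linear map `M → N^{⊕n}` (the direct sum of `n` copies of `N`). -/
noncomputable def surjNum (R M N : Type*) [CommRing R] [AddCommGroup M] [Module R M]
    [AddCommGroup N] [Module R N] : ℕ :=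
  sSup {n : ℕ | ∃ f : M →ₗ[R] (Fin n → N), Function.Surjective f}

/-- The minimal number of generators of a finitely generated module `M` over a ring `R`. -/
noncomputable def minGens (R M : Type*) [CommRing R] [AddCommGroup M] [Module R M] : ℕ :=
  sInf {n : ℕ | ∃ s : Fin n → M, Submodule.span R (Set.range s) = ⊤}

open Function IsLocalRing Submodule

section DropCoord

variable (R N : Type*) [CommRing R] [AddCommGroup N] [Module R N]

abbrev dropCoord {c : ℕ} (i : Fin (c + 1)) : (Fin (c + 1) → N) →ₗ[R] (Fin c → N) :=
  LinearMap.funLeft R N i.succAbove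

variable {R N}

theorem range_dropCoord {c : ℕ} (i : Fin (c + 1)) : LinearMap.range (dropCoord R N i) = ⊤ :=
  LinearMap.range_eq_top.mpr (LinearMap.funLeft_surjective_of_injective R N _
    Fin.succAbove_right_injective)

theorem dropCoord_single {c : ℕ} (i : Fin (c + 1)) (a : N) :
    dropCoord R N i (Pi.single i a) = 0 := by
  ext j
  simp [Fin.succAbove_ne]

end DropCoord

section Peeling

variable {R P N : Type*} [CommRing R] [IsLocalRing R] [AddCommGroup P] [Module R P]
  [AddCommGroup N] [Module R N]

theorem eq_top_of_sup_maximalIdeal_smul_eq_top [Module.Finite R P] {U : Submodule R P}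
    (h : U ⊔ maximalIdeal R • ⊤ = ⊤) : U = ⊤ :=
  IsLocalRing.map_mkQ_eq_top.mp ((map_mkQ_eq_top _ _).mpr (by rwa [sup_comm]))

theorem sup_maximalIdeal_smul_sup_span_singleton_eq_top {U : Submodule R P} {v x : P}
    (hv : U ⊔ R ∙ v = ⊤) (hx : x ∉ U ⊔ maximalIdeal R • ⊤) :
    U ⊔ maximalIdeal R • ⊤ ⊔ R ∙ x = ⊤ := by
  obtain ⟨u, hu, _, hrv, rfl⟩ := mem_sup.mp (hv.ge (mem_top : x ∈ ⊤))
  obtain ⟨r, rfl⟩ := mem_span_singleton.mp hrv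
  have hr : IsUnit r := by
    by_contra hr
    exact hx (add_mem (mem_sup_left hu)
      (mem_sup_right (smul_mem_smul ((mem_maximalIdeal r).mpr hr) mem_top)))
  obtain ⟨s, hs⟩ := hr.exists_left_inv
  have hvmem : s • ((u + r • v) - u) ∈ U ⊔ maximalIdeal R • ⊤ ⊔ R ∙ (u + r • v) :=
    smul_mem _ _ (sub_mem (mem_sup_right (mem_span_singleton_self _))
      (mem_sup_left (mem_sup_left hu)))
  rw [add_sub_cancel_left, smul_smul, hs, one_smul] at hvmem
  exact eq_top_iff.mpr (hv.ge.trans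
    (sup_le (le_sup_left.trans le_sup_left) ((span_singleton_le_iff_mem _ _).mpr hvmem)))

theorem exists_map_dropCoord_eq_top [Module.Finite R N] {c : ℕ}
    {U : Submodule R (Fin (c + 1) → N)} {v : Fin (c + 1) → N} (hv : U ⊔ R ∙ v = ⊤) :
    ∃ i, U.map (dropCoord R N i) = ⊤ := by
  set W := U ⊔ maximalIdeal R • ⊤
  obtain ⟨i, hi⟩ : ∃ i, W ⊔ R ∙ Pi.single i (v i) = ⊤ := by
    by_cases hsingle : ∀ i, Pi.single i (v i) ∈ W
    · have hvW : v ∈ W := Finset.univ_sum_single v ▸ sum_mem fun i _ ↦ hsingle i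
      have hW : W = ⊤ := eq_top_iff.mpr
        (hv.ge.trans (sup_le le_sup_left ((span_singleton_le_iff_mem _ _).mpr hvW)))
      exact ⟨0, by rw [hW, top_sup_eq]⟩
    · obtain ⟨i, hi⟩ := not_forall.mp hsingle
      exact ⟨i, sup_maximalIdeal_smul_sup_span_singleton_eq_top hv hi⟩
  refine ⟨i, eq_top_of_sup_maximalIdeal_smul_eq_top ?_⟩
  have hker : R ∙ Pi.single i (v i) ≤ LinearMap.ker (dropCoord R N i) :=
    (span_singleton_le_iff_mem _ _).mpr (dropCoord_single i (v i))
  have hW : W.map (dropCoord R N i) = ⊤ :=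
    (LinearMap.map_eq_top_iff (range_dropCoord i)).mpr
      (top_le_iff.mp (hi ▸ sup_le_sup_left hker W))
  rwa [Submodule.map_sup, map_smul'', Submodule.map_top, range_dropCoord] at hW

theorem exists_map_eq_top_of_sup_span_eq_top [Module.Finite R N] {g : ℕ} :
    ∀ {c : ℕ} {U : Submodule R (Fin c → N)} {s : Fin g → Fin c → N},
      U ⊔ span R (Set.range s) = ⊤ →
        ∃ q : (Fin c → N) →ₗ[R] (Fin (c - g) → N), U.map q = ⊤ := by
  induction g with
  | zero =>
    intro c U s h
    exact ⟨LinearMap.id, by simpa [Set.range_eq_empty s] using h⟩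
  | succ g ih =>
    rintro (_ | c) U s h
    · rw [Nat.zero_sub]
      exact ⟨0, Subsingleton.elim _ _⟩
    rw [← Fin.cons_self_tail s, Fin.range_cons, span_insert, sup_left_comm, sup_comm] at h
    obtain ⟨i, hi⟩ := exists_map_dropCoord_eq_top h
    rw [Submodule.map_sup, map_span, ← Set.range_comp] at hi
    obtain ⟨q, hq⟩ := ih hi
    rw [Nat.succ_sub_succ]
    exact ⟨q ∘ₗ dropCoord R N i, by rwa [map_comp]⟩

end Peeling

section SurjNum

variable {R M M' N : Type*} [CommRing R] [AddCommGroup M] [Module R M]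
  [AddCommGroup M'] [Module R M'] [AddCommGroup N] [Module R N]

theorem exists_span_range_eq_top_minGens [Module.Finite R M] :
    ∃ s : Fin (minGens R M) → M, span R (Set.range s) = ⊤ :=
  Nat.sInf_mem (Module.Finite.exists_fin (R := R) (M := M))

variable [IsLocalRing R] [Module.Finite R N] [Nontrivial N]

theorem le_of_surjective_of_span_range_eq_top {n g : ℕ} {f : M →ₗ[R] (Fin n → N)}
    (hf : Surjective f) {s : Fin g → M} (hs : span R (Set.range s) = ⊤) : n ≤ g := by
  have hspan : (⊥ : Submodule R (Fin n → N)) ⊔ span R (Set.range (f ∘ s)) = ⊤ := by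
    rw [bot_sup_eq, Set.range_comp, ← map_span, hs, Submodule.map_top,
      LinearMap.range_eq_top.mpr hf]
  obtain ⟨q, hq⟩ := exists_map_eq_top_of_sup_span_eq_top hspan
  rw [Submodule.map_bot, subsingleton_iff_bot_eq_top, Submodule.subsingleton_iff] at hq
  by_contra! hlt
  have : Nonempty (Fin (n - g)) := ⟨⟨0, by omega⟩⟩
  exact not_subsingleton (Fin (n - g) → N) hq

variable [Module.Finite R M]

theorem bddAbove_surjNum_set :
    BddAbove {n : ℕ | ∃ f : M →ₗ[R] (Fin n → N), Surjective f} := by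
  obtain ⟨s, hs⟩ := exists_span_range_eq_top_minGens (R := R) (M := M)
  exact ⟨minGens R M, fun _ ⟨_, hf⟩ ↦ le_of_surjective_of_span_range_eq_top hf hs⟩

theorem le_surjNum {n : ℕ} {f : M →ₗ[R] (Fin n → N)} (hf : Surjective f) :
    n ≤ surjNum R M N :=
  le_csSup bddAbove_surjNum_set ⟨f, hf⟩

theorem exists_surjective_surjNum : ∃ f : M →ₗ[R] (Fin (surjNum R M N) → N), Surjective f :=
  Nat.sSup_mem ⟨0, show ∃ f : M →ₗ[R] (Fin 0 → N), Surjective f from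
    ⟨0, fun _ ↦ ⟨0, Subsingleton.elim _ _⟩⟩⟩ bddAbove_surjNum_set

variable [Module.Finite R M']

theorem surjNum_add_surjNum_le_surjNum_prod :
    surjNum R M N + surjNum R M' N ≤ surjNum R (M × M') N := by
  obtain ⟨f, hf⟩ := exists_surjective_surjNum (R := R) (M := M) (N := N)
  obtain ⟨f', hf'⟩ := exists_surjective_surjNum (R := R) (M := M') (N := N)
  let e : ((Fin (surjNum R M N) → N) × (Fin (surjNum R M' N) → N)) ≃ₗ[R]
      (Fin (surjNum R M N + surjNum R M' N) → N) :=
    (LinearEquiv.sumArrowLequivProdArrow _ _ R N).symm.trans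
      (LinearEquiv.funCongrLeft R N finSumFinEquiv.symm)
  exact le_surjNum (f := e.toLinearMap ∘ₗ f.prodMap f') (e.surjective.comp (hf.prodMap hf'))

theorem surjNum_prod_le_surjNum_add_minGens :
    surjNum R (M × M') N ≤ surjNum R M N + minGens R M' := by
  obtain ⟨F, hF⟩ := exists_surjective_surjNum (R := R) (M := M × M') (N := N)
  obtain ⟨s, hs⟩ := exists_span_range_eq_top_minGens (R := R) (M := M')
  have hspan : LinearMap.range (F ∘ₗ LinearMap.inl R M M') ⊔
      span R (Set.range (⇑(F ∘ₗ LinearMap.inr R M M') ∘ s)) = ⊤ := by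
    rw [Set.range_comp, ← map_span, hs, Submodule.map_top, LinearMap.range_comp,
      LinearMap.range_comp, ← Submodule.map_sup, LinearMap.sup_range_inl_inr, Submodule.map_top,
      LinearMap.range_eq_top.mpr hF]
  obtain ⟨q, hq⟩ := exists_map_eq_top_of_sup_span_eq_top hspan
  rw [← LinearMap.range_comp, LinearMap.range_eq_top] at hq
  have := le_surjNum hq
  omega

end SurjNum

theorem surjNum_sum_bounds_general
    {R : Type*} [CommRing R] [IsLocalRing R]
    {M M' N : Type*} [AddCommGroup M] [Module R M] [AddCommGroup M'] [Module R M']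
    [AddCommGroup N] [Module R N]
    [Module.Finite R M] [Module.Finite R M'] [Module.Finite R N] (hN : Nontrivial N) :
    surjNum R M N + surjNum R M' N ≤ surjNum R (M × M') N ∧
      surjNum R (M × M') N ≤ surjNum R M N + minGens R M' :=
  ⟨surjNum_add_surjNum_le_surjNum_prod, surjNum_prod_le_surjNum_add_minGens⟩

/-- Over a Noetherian local ring,
`surj_N(M) + surj_N(M') ≤ surj_N(M ⊕ M') ≤ surj_N(M) + μ_R(M')`, equivalently
`surj_N(M') ≤ surj_N(M ⊕ M') − surj_N(M) ≤ μ_R(M')`. -/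
theorem surjNum_sum_bounds
    {R : Type*} [CommRing R] [IsNoetherianRing R] [IsLocalRing R]
    {M M' N : Type*} [AddCommGroup M] [Module R M] [AddCommGroup M'] [Module R M']
    [AddCommGroup N] [Module R N]
    [Module.Finite R M] [Module.Finite R M'] [Module.Finite R N] (hN : Nontrivial N) :
    surjNum R M N + surjNum R M' N ≤ surjNum R (M × M') N ∧
      surjNum R (M × M') N ≤ surjNum R M N + minGens R M' :=
  surjNum_sum_bounds_general hN
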